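/- Suppose a ∈ Cl(V) satisfies a a̅ ∈ ℝ^× (a nonzero real scalar) and a x ã ∈ V for all x ∈ V. Then a is invertible and a x (â)⁻¹ ∈ V for all x ∈ V, i.e. a lies in the Lipschitz group Γ(V). -/

import Mathlib

open CliffordAlgebra

/-! From `a a̅ = r` with `r ≠ 0`, `r⁻¹ a̅` is a right inverse of `a`. It is also a left inverse
because Clifford algebras over a field are Dedekind-finite: `a` and `a̅` lie in the subalgebra
generated by finitely many vectors, and since vectors square to scalars and anticommute up to
scalars, that subalgebra is spanned by the finitely many increasing products of the generators; a
finite-dimensional algebra is Artinian, hence Dedekind-finite. Applying `involute` gives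
`(â)⁻¹ = r⁻¹ ã`, so `a x (â)⁻¹ = r⁻¹ (a x ã) ∈ V`. -/

section SortedProds

variable {R A ι : Type*} [CommRing R] [Ring A] [Algebra R A] [LinearOrder ι]

def sortedProds (g : ι → A) : Set A :=
  {x | ∃ l : List ι, l.IsChain (· < ·) ∧ (l.map g).prod = x}

theorem sortedProds_finite [Fintype ι] (g : ι → A) : (sortedProds g).Finite := by
  refine ((List.finite_length_le ι (Fintype.card ι)).image fun l => (l.map g).prod).subset ?_
  rintro _ ⟨l, hl, rfl⟩
  exact ⟨l, List.Nodup.length_le_card ((List.isChain_iff_pairwise.mp hl).imp ne_of_lt), rfl⟩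

variable {g : ι → A} (hsq : ∀ i, ∃ r : R, g i * g i = algebraMap R A r)
  (hswap : ∀ i j, ∃ r : R, g i * g j + g j * g i = algebraMap R A r)
include hsq hswap

theorem mul_mem_span_sortedProds [WellFoundedLT ι] (j : ι) {x : A}
    (hx : x ∈ Submodule.span R (sortedProds g)) :
    g j * x ∈ Submodule.span R (sortedProds g) := by
  induction j using WellFoundedLT.induction generalizing x with
  | ind j ih =>
  suffices Submodule.span R (sortedProds g) ≤
      (Submodule.span R (sortedProds g)).comap (LinearMap.mulLeft R (g j)) from this hx
  rw [Submodule.span_le]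
  rintro _ ⟨l, hl, rfl⟩
  induction l with
  | nil => exact Submodule.subset_span ⟨[j], List.isChain_singleton j, by simp⟩
  | cons i l ihl =>
    have hl' : l.IsChain (· < ·) := hl.tail
    have hmem : (l.map g).prod ∈ Submodule.span R (sortedProds g) :=
      Submodule.subset_span ⟨l, hl', rfl⟩
    simp only [SetLike.mem_coe, Submodule.mem_comap, LinearMap.mulLeft_apply, List.map_cons,
      List.prod_cons, ← mul_assoc] at ihl ⊢
    rcases lt_trichotomy j i with hji | rfl | hij
    · exact Submodule.subset_span
        ⟨j :: i :: l, List.isChain_cons_cons.mpr ⟨hji, hl⟩, by simp [mul_assoc]⟩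
    · obtain ⟨r, hr⟩ := hsq j
      rw [hr, ← Algebra.smul_def]
      exact Submodule.smul_mem _ r hmem
    · obtain ⟨r, hr⟩ := hswap i j
      rw [eq_sub_of_add_eq' hr, sub_mul, ← Algebra.smul_def, mul_assoc]
      exact sub_mem (Submodule.smul_mem _ r hmem) (ih i hij (ihl hl'))

theorem adjoin_range_le_span_sortedProds [WellFoundedLT ι] :
    Subalgebra.toSubmodule (Algebra.adjoin R (Set.range g)) ≤
      Submodule.span R (sortedProds g) := by
  intro x hx
  suffices ∀ y ∈ Submodule.span R (sortedProds g), x * y ∈ Submodule.span R (sortedProds g) by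
    simpa using this 1 (Submodule.subset_span ⟨[], List.isChain_nil, rfl⟩)
  induction hx using Algebra.adjoin_induction with
  | mem _ hx =>
    obtain ⟨i, rfl⟩ := hx
    exact fun y hy => mul_mem_span_sortedProds hsq hswap i hy
  | algebraMap r =>
    intro y hy
    rw [← Algebra.smul_def]
    exact Submodule.smul_mem _ r hy
  | add b c _ _ hb hc =>
    intro y hy
    rw [add_mul]
    exact add_mem (hb y hy) (hc y hy)
  | mul b c _ _ hb hc =>
    intro y hy
    rw [mul_assoc]
    exact hb _ (hc y hy)

end SortedProds

theorem finiteDimensional_adjoin_of_sq_of_anticomm {K A : Type*} [Field K] [Ring A]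
    [Algebra K A] {S : Set A} (hS : S.Finite)
    (hsq : ∀ x ∈ S, ∃ r : K, x * x = algebraMap K A r)
    (hswap : ∀ x ∈ S, ∀ y ∈ S, ∃ r : K, x * y + y * x = algebraMap K A r) :
    FiniteDimensional K (Algebra.adjoin K S) := by
  have : Fintype S := hS.fintype
  let : LinearOrder S := LinearOrder.lift' _ (Fintype.equivFin S).injective
  have : FiniteDimensional K (Submodule.span K (sortedProds ((↑) : S → A))) :=
    FiniteDimensional.span_of_finite K (sortedProds_finite _)
  have hle := adjoin_range_le_span_sortedProds (g := ((↑) : S → A))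
    (fun x => hsq x x.2) (fun x y => hswap x x.2 y y.2)
  rw [Subtype.range_coe] at hle
  exact Submodule.finiteDimensional_of_le hle

namespace CliffordAlgebra

variable {R V : Type*} [CommRing R] [AddCommGroup V] [Module R V] {Q : QuadraticForm R V}

theorem exists_finite_mem_adjoin_ι (x : CliffordAlgebra Q) :
    ∃ s : Set V, s.Finite ∧ x ∈ Algebra.adjoin R (ι Q '' s) := by
  have mono {s t : Set V} (h : s ⊆ t) :
      Algebra.adjoin R (ι Q '' s) ≤ Algebra.adjoin R (ι Q '' t) :=
    Algebra.adjoin_mono (Set.image_mono h)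
  induction x using CliffordAlgebra.induction with
  | algebraMap r => exact ⟨∅, Set.finite_empty, Subalgebra.algebraMap_mem _ r⟩
  | ι v => exact ⟨{v}, Set.finite_singleton v, Algebra.subset_adjoin ⟨v, rfl, rfl⟩⟩
  | mul x y hx hy =>
    obtain ⟨s, hs, hx⟩ := hx
    obtain ⟨t, ht, hy⟩ := hy
    exact ⟨s ∪ t, hs.union ht,
      mul_mem (mono Set.subset_union_left hx) (mono Set.subset_union_right hy)⟩
  | add x y hx hy =>
    obtain ⟨s, hs, hx⟩ := hx
    obtain ⟨t, ht, hy⟩ := hy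
    exact ⟨s ∪ t, hs.union ht,
      add_mem (mono Set.subset_union_left hx) (mono Set.subset_union_right hy)⟩

end CliffordAlgebra

instance CliffordAlgebra.instIsDedekindFiniteMonoid {K V : Type*} [Field K] [AddCommGroup V]
    [Module K V] (Q : QuadraticForm K V) : IsDedekindFiniteMonoid (CliffordAlgebra Q) where
  mul_eq_one_symm {a u} hau := by
    obtain ⟨s, hs, ha⟩ := exists_finite_mem_adjoin_ι a
    obtain ⟨t, ht, hu⟩ := exists_finite_mem_adjoin_ι u
    let B := Algebra.adjoin K (ι Q '' (s ∪ t))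
    have haB : a ∈ B := Algebra.adjoin_mono (Set.image_mono Set.subset_union_left) ha
    have huB : u ∈ B := Algebra.adjoin_mono (Set.image_mono Set.subset_union_right) hu
    have : FiniteDimensional K B := finiteDimensional_adjoin_of_sq_of_anticomm
      ((hs.union ht).image _) (by rintro _ ⟨v, -, rfl⟩; exact ⟨_, ι_sq_scalar Q v⟩)
      (by rintro _ ⟨v, -, rfl⟩ _ ⟨w, -, rfl⟩; exact ⟨_, ι_mul_ι_add_swap v w⟩)
    have : IsArtinianRing B := .of_finite K B
    exact congrArg Subtype.val
      (mul_eq_one_symm (a := (⟨a, haB⟩ : B)) (b := ⟨u, huB⟩) (Subtype.ext hau))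

theorem mem_lipschitz_of_conj_conditions (V : Type*) [AddCommGroup V] [Module ℝ V]
    (Q : QuadraticForm ℝ V)
    (a : CliffordAlgebra (-Q))
    (h1 : ∃ r : ℝ, r ≠ 0 ∧ a * reverse (involute a) = algebraMap ℝ _ r)
    (h2 : ∀ x : V, ∃ y : V, a * ι (-Q) x * reverse a = ι (-Q) y) :
    IsUnit a ∧ ∀ x : V, ∃ y : V, a * ι (-Q) x * Ring.inverse (involute a) = ι (-Q) y := by
  obtain ⟨r, hr0, hr⟩ := h1
  have hright : a * (r⁻¹ • reverse (involute a)) = 1 := by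
    rw [mul_smul_comm, hr, Algebra.smul_def, ← map_mul, inv_mul_cancel₀ hr0, map_one]
  have hright_involute : involute a * (r⁻¹ • reverse a) = 1 := by
    simpa only [map_mul, map_smul, map_one, involute_involute, reverse_involute]
      using congrArg involute hright
  have hinv : Ring.inverse (involute a) = r⁻¹ • reverse a :=
    Ring.inverse_unit (Units.mkOfMulEqOne _ _ hright_involute)
  refine ⟨IsUnit.of_mul_eq_one _ hright, fun x => ?_⟩
  obtain ⟨y, hy⟩ := h2 x
  exact ⟨r⁻¹ • y, by rw [hinv, mul_smul_comm, hy, map_smul]⟩
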